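/- arXiv:1706.04255 — 7 statements merged into one kernel-verified Lean document; each statement's English description precedes it below -/
import Mathlib

section
/- Let G be a connected finite simple graph, and let {x₁, y₁} and {x₂, y₂} be two pairs of distinct vertices of G such that x₁ and x₂ lie in the same biconnected component of G and y₁ and y₂ lie in the same biconnected component of G. Let P₁ be any path from x₁ to y₁ in G and let P₂ be any path from x₂ to y₂ in G. Then: (1) a bridge uv of G belongs to P₁ (i.e., uv is an edge of P₁) if and only if uv belongs to P₂; and (2) a biconnected component Q of G is crossed by P₁ (i.e., V(Q) ∩ V(P₁) ≠ ∅) if and only if Q is crossed by P₂. -/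
/-!
A trail through a bridge `e` joins two vertices that are separated in `G - e`. Since
biconnected components contain no bridges, replacing the endpoints by vertices of the same
biconnected components keeps them separated in `G - e`, so every walk between them uses `e`
as well. A walk that enters a biconnected component `C` it did not start in must do
so through a bridge ending in `C`, and any other path with endpoints in the same components
uses that bridge, hence meets `C` too.
-/

open SimpleGraph

/-- The graph obtained from `G` by deleting all its bridges; its connected
components are the biconnected components of `G`. -/
def bicompGraph {α : Type*} (G : SimpleGraph α) : SimpleGraph α :=
  G.deleteEdges {e | G.IsBridge e}

namespace SimpleGraph

variable {α : Type*} {G : SimpleGraph α}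

theorem bicompGraph_le_deleteEdges {e : Sym2 α} (he : G.IsBridge e) :
    bicompGraph G ≤ G.deleteEdges {e} :=
  deleteEdges_anti (Set.singleton_subset_iff.2 he)

theorem Walk.IsTrail.not_reachable_deleteEdges {x y : α} {p : G.Walk x y} (hp : p.IsTrail)
    {e : Sym2 α} (he : G.IsBridge e) (hep : e ∈ p.edges) :
    ¬ (G.deleteEdges {e}).Reachable x y := by
  induction p with
  | nil => simp at hep
  | @cons u w y h q ih =>
    rw [Walk.isTrail_cons] at hp
    rcases List.mem_cons.1 hep with rfl | hep
    · exact fun huy ↦ he (huy.trans (q.toDeleteEdge _ hp.2).reachable.symm)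
    · have huw : (G.deleteEdges {e}).Adj u w :=
        (deleteEdges_adj ..).2 ⟨h, fun h' ↦ hp.2 (Set.mem_singleton_iff.1 h' ▸ hep)⟩
      exact fun huy ↦ ih hp.1 hep (huw.reachable.symm.trans huy)

theorem IsBridge.mem_edges_of_isTrail {e : Sym2 α} (he : G.IsBridge e) {x₁ y₁ x₂ y₂ : α}
    {p : G.Walk x₁ y₁} (hp : p.IsTrail) (q : G.Walk x₂ y₂)
    (hx : (bicompGraph G).connectedComponentMk x₁ = (bicompGraph G).connectedComponentMk x₂)
    (hy : (bicompGraph G).connectedComponentMk y₁ = (bicompGraph G).connectedComponentMk y₂)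
    (hep : e ∈ p.edges) : e ∈ q.edges := by
  by_contra heq
  have hx' := (ConnectedComponent.exact hx).mono (bicompGraph_le_deleteEdges he)
  have hy' := (ConnectedComponent.exact hy).mono (bicompGraph_le_deleteEdges he)
  exact hp.not_reachable_deleteEdges he hep
    ((hx'.trans (q.toDeleteEdge e heq).reachable).trans hy'.symm)

theorem Walk.exists_isBridge_mem_edges_of_mem_supp {x y : α} (p : G.Walk x y)
    {C : (bicompGraph G).ConnectedComponent} (hx : x ∉ C.supp) {v : α} (hvp : v ∈ p.support)
    (hvC : v ∈ C.supp) : ∃ a b, G.IsBridge s(a, b) ∧ s(a, b) ∈ p.edges ∧ b ∈ C.supp := by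
  induction p with
  | nil => exact absurd (List.mem_singleton.1 hvp ▸ hvC) hx
  | @cons u w y h q ih =>
    by_cases hw : w ∈ C.supp
    · refine ⟨u, w, ?_, by simp, hw⟩
      by_contra hb
      exact hx ((C.mem_supp_congr_adj ((deleteEdges_adj ..).2 ⟨h, hb⟩)).2 hw)
    · rcases List.mem_cons.1 hvp with rfl | hvq
      · exact absurd hvC hx
      · obtain ⟨a, b, hb, hab, hbC⟩ := ih hw hvq
        exact ⟨a, b, hb, List.mem_cons_of_mem _ hab, hbC⟩

theorem Walk.IsTrail.exists_mem_supp_support {x₁ y₁ x₂ y₂ : α} {p : G.Walk x₁ y₁}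
    (hp : p.IsTrail) (q : G.Walk x₂ y₂)
    (hx : (bicompGraph G).connectedComponentMk x₁ = (bicompGraph G).connectedComponentMk x₂)
    (hy : (bicompGraph G).connectedComponentMk y₁ = (bicompGraph G).connectedComponentMk y₂)
    {C : (bicompGraph G).ConnectedComponent} (hC : ∃ v ∈ C.supp, v ∈ p.support) :
    ∃ v ∈ C.supp, v ∈ q.support := by
  obtain ⟨v, hvC, hvp⟩ := hC
  by_cases hxC : x₁ ∈ C.supp
  · exact ⟨x₂, hx.symm.trans hxC, q.start_mem_support⟩
  · obtain ⟨a, b, hb, hab, hbC⟩ := p.exists_isBridge_mem_edges_of_mem_supp hxC hvp hvC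
    exact ⟨b, hbC, q.snd_mem_support_of_mem_edges (hb.mem_edges_of_isTrail hp q hx hy hab)⟩

end SimpleGraph

theorem stmt1_general {α : Type*} (G : SimpleGraph α)
    (x₁ y₁ x₂ y₂ : α)
    (hx : (bicompGraph G).connectedComponentMk x₁ = (bicompGraph G).connectedComponentMk x₂)
    (hy : (bicompGraph G).connectedComponentMk y₁ = (bicompGraph G).connectedComponentMk y₂)
    (P₁ : G.Walk x₁ y₁) (hP₁ : P₁.IsPath) (P₂ : G.Walk x₂ y₂) (hP₂ : P₂.IsPath) :
    (∀ e : Sym2 α, G.IsBridge e → (e ∈ P₁.edges ↔ e ∈ P₂.edges)) ∧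
    (∀ C : (bicompGraph G).ConnectedComponent,
      ((∃ v ∈ C.supp, v ∈ P₁.support) ↔ (∃ v ∈ C.supp, v ∈ P₂.support))) :=
  ⟨fun _ he ↦ ⟨he.mem_edges_of_isTrail hP₁.isTrail P₂ hx hy,
      he.mem_edges_of_isTrail hP₂.isTrail P₁ hx.symm hy.symm⟩,
    fun _ ↦ ⟨hP₁.isTrail.exists_mem_supp_support P₂ hx hy,
      hP₂.isTrail.exists_mem_supp_support P₁ hx.symm hy.symm⟩⟩

/-- Let `G` be connected, `{x₁, y₁}` and `{x₂, y₂}` pairs of distinct vertices with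
`x₁, x₂` in the same biconnected component and `y₁, y₂` in the same biconnected
component. Then for any path `P₁` from `x₁` to `y₁` and any path `P₂` from `x₂` to `y₂`:
(1) a bridge of `G` belongs to `P₁` iff it belongs to `P₂`; and
(2) a biconnected component of `G` is crossed by `P₁` iff it is crossed by `P₂`. -/
theorem stmt1 {α : Type*} [Fintype α] (G : SimpleGraph α) (hG : G.Connected)
    (x₁ y₁ x₂ y₂ : α) (h₁ : x₁ ≠ y₁) (h₂ : x₂ ≠ y₂)
    (hx : (bicompGraph G).connectedComponentMk x₁ = (bicompGraph G).connectedComponentMk x₂)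
    (hy : (bicompGraph G).connectedComponentMk y₁ = (bicompGraph G).connectedComponentMk y₂)
    (P₁ : G.Walk x₁ y₁) (hP₁ : P₁.IsPath) (P₂ : G.Walk x₂ y₂) (hP₂ : P₂.IsPath) :
    (∀ e : Sym2 α, G.IsBridge e → (e ∈ P₁.edges ↔ e ∈ P₂.edges)) ∧
    (∀ C : (bicompGraph G).ConnectedComponent,
      ((∃ v ∈ C.supp, v ∈ P₁.support) ↔ (∃ v ∈ C.supp, v ∈ P₂.support))) :=
  stmt1_general G x₁ y₁ x₂ y₂ hx hy P₁ hP₁ P₂ hP₂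
end

section
/- Let G and H be finite simple graphs and let φ : V(H) → V(G) be an injective map such that the superposition F = G ⊕_φ H is connected. Let X be a vertex cover of H with |X| = t ≥ 1. Then there exists a set Y ⊆ V(H) \ X with |Y| ≤ 2(t−1) such that, setting H' = H[X ∪ Y] (the subgraph of H induced by X ∪ Y) and ψ = φ restricted to X ∪ Y, all vertices of ψ(X ∪ Y) lie in the same connected component of the superposition F' = G ⊕_ψ H'. -/
open SimpleGraph

/-- The superposition `G ⊕_φ H` of `G` and `H` with respect to an injective map
`φ : V(H) ↪ V(G)`: vertices `u, v` are adjacent iff `uv ∈ E(G)`, or both are in the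
image of `φ` and their preimages are adjacent in `H`. -/
def superpose {α β : Type*} (G : SimpleGraph α) (H : SimpleGraph β) (φ : β ↪ α) :
    SimpleGraph α :=
  G ⊔ SimpleGraph.map φ H

/-- The subgraph of `H` consisting of the edges of the induced subgraph `H[s]`
(on the same vertex type). -/
def restrict {β : Type*} (H : SimpleGraph β) (s : Set β) : SimpleGraph β where
  Adj x y := x ∈ s ∧ y ∈ s ∧ H.Adj x y
  symm := ⟨fun x y h => ⟨h.2.1, h.1, h.2.2.symm⟩⟩
  loopless := ⟨fun x h => H.irrefl h.2.2⟩

/-! Fix `x₀ ∈ X` and grow `Y` greedily, keeping all of `Y` in the component of `φ x₀`. If some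
`φ y` with `y ∈ X` lies outside that component, walk along a path of `G ⊕_φ H` from `φ x₀` back
to `φ y`. Every `H`-edge has an endpoint in `X`, so crossing it costs at most one new vertex;
hence each vertex of the path becomes reachable after adding at most one new vertex, unless a
cover vertex outside the component has already been absorbed at the cost of at most two. Each
round thus absorbs a cover vertex for at most two new vertices, and only `t - 1` cover vertices
are outside the component at the start. -/

section Superpose

variable {α β : Type*} {G : SimpleGraph α} {H H' : SimpleGraph β} {φ : β ↪ α}

lemma superpose_adj {u v : α} :
    (superpose G H φ).Adj u v ↔ G.Adj u v ∨ ∃ a b, H.Adj a b ∧ φ a = u ∧ φ b = v := by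
  simp [superpose]

lemma superpose_mono (h : H ≤ H') : superpose G H φ ≤ superpose G H' φ :=
  sup_le_sup_left (map_monotone φ h) G

lemma restrict_mono {s t : Set β} (hst : s ⊆ t) : restrict H s ≤ restrict H t :=
  fun _ _ hab => ⟨hst hab.1, hst hab.2.1, hab.2.2⟩

lemma superpose_restrict_adj {s : Set β} {a b : β} (ha : a ∈ s) (hb : b ∈ s)
    (hab : H.Adj a b) : (superpose G (restrict H s) φ).Adj (φ a) (φ b) :=
  superpose_adj.2 (Or.inr ⟨a, b, ⟨ha, hb, hab⟩, rfl, rfl⟩)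

end Superpose

section Augmentation

variable {α β : Type*} [DecidableEq β] {G : SimpleGraph α} {H : SimpleGraph β} {φ : β ↪ α}

local notation "F[" s "]" => superpose G (restrict H (↑s : Set _)) φ

variable (G H φ) in
def ReachableByAdding (S : Finset β) (r : α) (k : ℕ) (v : α) : Prop :=
  ∃ Z : Finset β, Z.card ≤ k ∧ Disjoint Z S ∧ F[S ∪ Z].Reachable r v ∧
    ∀ b ∈ Z, F[S ∪ Z].Reachable r (φ b)

variable (G H φ) in
def ReachesNewCoverVertex (X S : Finset β) (r : α) : Prop :=
  ∃ y ∈ X, ¬ F[S].Reachable r (φ y) ∧ ReachableByAdding G H φ S r 2 (φ y)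

variable {S X : Finset β} {r u v : α} {k l : ℕ}

lemma reachableByAdding_zero_iff :
    ReachableByAdding G H φ S r 0 v ↔ F[S].Reachable r v := by
  constructor
  · rintro ⟨Z, hZ, -, hv, -⟩
    rwa [Finset.card_eq_zero.1 (Nat.le_zero.1 hZ), Finset.union_empty] at hv
  · intro hv
    exact ⟨∅, le_rfl, Finset.disjoint_empty_left S, by rwa [Finset.union_empty], by simp⟩

lemma ReachableByAdding.mono (hkl : k ≤ l) (h : ReachableByAdding G H φ S r k v) :
    ReachableByAdding G H φ S r l v :=
  let ⟨Z, hZ, hZS, hv, hZr⟩ := h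
  ⟨Z, hZ.trans hkl, hZS, hv, hZr⟩

lemma ReachableByAdding.of_adj_left (h : ReachableByAdding G H φ S r k u) (huv : G.Adj u v) :
    ReachableByAdding G H φ S r k v :=
  let ⟨Z, hZ, hZS, hu, hZr⟩ := h
  ⟨Z, hZ, hZS, hu.trans (Adj.reachable (le_sup_left (a := G) huv)), hZr⟩

lemma ReachableByAdding.of_adj_right {a b : β} (h : ReachableByAdding G H φ S r k (φ a))
    (hab : H.Adj a b) (hS : a ∈ S ∨ b ∈ S) :
    ReachableByAdding G H φ S r (k + 1) (φ b) := by
  obtain ⟨Z, hZ, hZS, ha, hZr⟩ := h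
  set Z' := Z ∪ ({a, b} \ S)
  have hle : F[S ∪ Z] ≤ F[S ∪ Z'] :=
    superpose_mono (restrict_mono (by gcongr; exact Finset.subset_union_left))
  have hab' : F[S ∪ Z'].Adj (φ a) (φ b) := by
    refine superpose_restrict_adj (Finset.mem_coe.2 ?_) (Finset.mem_coe.2 ?_) hab <;>
      simp only [Finset.mem_union, Finset.mem_sdiff, Finset.mem_insert, Finset.mem_singleton, Z'] <;>
      tauto
  have hb : F[S ∪ Z'].Reachable r (φ b) := (ha.mono hle).trans hab'.reachable
  refine ⟨Z', ?_, ?_, hb, ?_⟩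
  · have : ({a, b} \ S).card ≤ 1 := Finset.card_le_one.2 fun x hx y hy => by
      simp only [Finset.mem_sdiff, Finset.mem_insert, Finset.mem_singleton] at hx hy
      grind
    exact (Finset.card_union_le _ _).trans (by omega)
  · exact Finset.disjoint_union_left.2 ⟨hZS, Finset.sdiff_disjoint⟩
  · intro c hc
    rcases Finset.mem_union.1 hc with hc | hc
    · exact (hZr c hc).mono hle
    · rcases Finset.mem_insert.1 (Finset.mem_sdiff.1 hc).1 with rfl | hc
      · exact ha.mono hle
      · rw [Finset.mem_singleton.1 hc]; exact hb

lemma reachesNewCoverVertex_or_reachable {x : β} (hx : x ∈ X)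
    (h : ReachableByAdding G H φ S r 2 (φ x)) :
    ReachesNewCoverVertex G H φ X S r ∨ F[S].Reachable r (φ x) := by
  by_cases hx' : F[S].Reachable r (φ x)
  · exact Or.inr hx'
  · exact Or.inl ⟨x, hx, hx', h⟩

lemma SimpleGraph.Walk.reachesNewCoverVertex_or_reachableByAdding_one (hXS : X ⊆ S)
    (hX : ∀ a b, H.Adj a b → a ∈ X ∨ b ∈ X) {w : α} (p : (superpose G H φ).Walk v w)
    (hw : F[S].Reachable r w) :
    ReachesNewCoverVertex G H φ X S r ∨ ReachableByAdding G H φ S r 1 v := by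
  induction p with
  | nil => exact Or.inr ((reachableByAdding_zero_iff.2 hw).mono zero_le_one)
  | cons huv p ih =>
    refine (ih hw).elim Or.inl fun hv => ?_
    rcases superpose_adj.1 huv with hG | ⟨a, b, hab, rfl, rfl⟩
    · exact Or.inr (hv.of_adj_left hG.symm)
    rcases hX a b hab with ha | hb
    · refine (reachesNewCoverVertex_or_reachable ha ?_).imp_right
        fun h => (reachableByAdding_zero_iff.2 h).mono zero_le_one
      exact hv.of_adj_right hab.symm (Or.inr (hXS ha))
    · refine (reachesNewCoverVertex_or_reachable hb (hv.mono one_le_two)).imp_right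
        fun h => ?_
      exact (reachableByAdding_zero_iff.2 h).of_adj_right hab.symm (Or.inl (hXS hb))

lemma reachesNewCoverVertex_of_not_reachable (hF : (superpose G H φ).Connected)
    (hXS : X ⊆ S) (hX : ∀ a b, H.Adj a b → a ∈ X ∨ b ∈ X) {y : β} (hy : y ∈ X)
    (hny : ¬ F[S].Reachable r (φ y)) : ReachesNewCoverVertex G H φ X S r :=
  ((hF.preconnected (φ y) r).some.reachesNewCoverVertex_or_reachableByAdding_one hXS hX
    (Reachable.refl r)).elim id fun h => ⟨y, hy, hny, h.mono one_le_two⟩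

open scoped Classical in
lemma exists_disjoint_card_le_forall_reachable (hF : (superpose G H φ).Connected)
    (hX : ∀ a b, H.Adj a b → a ∈ X ∨ b ∈ X) (Y : Finset β) (hYX : Disjoint Y X)
    (hY : ∀ b ∈ Y, F[X ∪ Y].Reachable r (φ b)) :
    ∃ Y' : Finset β, Disjoint Y' X ∧
      Y'.card ≤ Y.card + 2 * {x ∈ X | ¬ F[X ∪ Y].Reachable r (φ x)}.card ∧
      ∀ x ∈ X ∪ Y', F[X ∪ Y'].Reachable r (φ x) := by
  by_cases hall : ∀ x ∈ X, F[X ∪ Y].Reachable r (φ x)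
  · exact ⟨Y, hYX, Nat.le_add_right _ _,
      fun x hx => (Finset.mem_union.1 hx).elim (hall x) (hY x)⟩
  push Not at hall
  obtain ⟨y₀, hy₀, hny₀⟩ := hall
  obtain ⟨y, hyX, hny, Z, hZ, hZS, hy, hZr⟩ :=
    reachesNewCoverVertex_of_not_reachable hF Finset.subset_union_left hX hy₀ hny₀
  rw [Finset.union_assoc] at hy hZr
  have hle : F[X ∪ Y] ≤ F[X ∪ (Y ∪ Z)] :=
    superpose_mono (restrict_mono (by gcongr; exact Finset.subset_union_left))
  have hlt : {x ∈ X | ¬ F[X ∪ (Y ∪ Z)].Reachable r (φ x)}.card <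
      {x ∈ X | ¬ F[X ∪ Y].Reachable r (φ x)}.card := by
    refine Finset.card_lt_card ((Finset.ssubset_iff_of_subset ?_).2 ⟨y, ?_, ?_⟩)
    · intro x hx
      simp only [Finset.mem_filter] at hx ⊢
      exact ⟨hx.1, fun h => hx.2 (h.mono hle)⟩
    · exact Finset.mem_filter.2 ⟨hyX, hny⟩
    · exact fun h => (Finset.mem_filter.1 h).2 hy
  obtain ⟨Y', hY'X, hY'card, hY'⟩ := exists_disjoint_card_le_forall_reachable hF hX (Y ∪ Z)
    (Finset.disjoint_union_left.2 ⟨hYX, (Finset.disjoint_union_right.1 hZS).1⟩)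
    (fun b hb => (Finset.mem_union.1 hb).elim (fun hb => (hY b hb).mono hle) (hZr b))
  refine ⟨Y', hY'X, ?_, hY'⟩
  have := Finset.card_union_le Y Z
  omega
termination_by {x ∈ X | ¬ (superpose G (restrict H ↑(X ∪ Y)) φ).Reachable r (φ x)}.card
decreasing_by exact hlt

end Augmentation

theorem stmt3_general {α β : Type*} [DecidableEq β]
    (G : SimpleGraph α) (H : SimpleGraph β) (φ : β ↪ α)
    (hF : (superpose G H φ).Connected)
    (X : Finset β) (hX : ∀ x y : β, H.Adj x y → x ∈ X ∨ y ∈ X)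
    (t : ℕ) (ht : X.card = t) (ht1 : 1 ≤ t) :
    ∃ Y : Finset β, Disjoint Y X ∧ Y.card ≤ 2 * (t - 1) ∧
      ∀ x ∈ X ∪ Y, ∀ y ∈ X ∪ Y,
        (superpose G (restrict H ↑(X ∪ Y)) φ).Reachable (φ x) (φ y) := by
  classical
  obtain ⟨x₀, hx₀⟩ : X.Nonempty := Finset.card_pos.1 (by omega)
  obtain ⟨Y, hYX, hYcard, hY⟩ := exists_disjoint_card_le_forall_reachable (r := φ x₀) hF hX ∅
    (Finset.disjoint_empty_left X) (by simp)
  have hunreached : {x ∈ X | ¬ (superpose G (restrict H ↑(X ∪ ∅)) φ).Reachable (φ x₀) (φ x)}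
      ⊆ X.erase x₀ := fun x hx => by
    simp only [Finset.mem_filter] at hx
    exact Finset.mem_erase.2 ⟨fun h => hx.2 (h ▸ Reachable.refl _), hx.1⟩
  have := Finset.card_le_card hunreached
  rw [Finset.card_erase_of_mem hx₀] at this
  refine ⟨Y, hYX, by simp only [Finset.card_empty] at hYcard; omega,
    fun x hx y hy => (hY x hx).symm.trans (hY y hy)⟩

/-- Let `φ : V(H) ↪ V(G)` be injective with `F = G ⊕_φ H` connected and let `X` be a
vertex cover of `H` of size `t ≥ 1`. Then there is `Y ⊆ V(H) \ X` with `|Y| ≤ 2(t-1)`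
such that, for `H' = H[X ∪ Y]` and `ψ = φ|_{X ∪ Y}`, all vertices of `ψ(X ∪ Y)` lie in
the same connected component of `F' = G ⊕_ψ H'`. -/
theorem stmt3 {α β : Type*} [Fintype α] [Fintype β] [DecidableEq β]
    (G : SimpleGraph α) (H : SimpleGraph β) (φ : β ↪ α)
    (hF : (superpose G H φ).Connected)
    (X : Finset β) (hX : ∀ x y : β, H.Adj x y → x ∈ X ∨ y ∈ X)
    (t : ℕ) (ht : X.card = t) (ht1 : 1 ≤ t) :
    ∃ Y : Finset β, Disjoint Y X ∧ Y.card ≤ 2 * (t - 1) ∧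
      ∀ x ∈ X ∪ Y, ∀ y ∈ X ∪ Y,
        (superpose G (restrict H ↑(X ∪ Y)) φ).Reachable (φ x) (φ y) :=
  stmt3_general G H φ hF X hX t ht ht1
end

section
/- Let G and H be finite simple graphs such that |V(H)| ≤ |V(G)| and H is connected (in particular nonempty). Then there exists an injective map φ : V(H) → V(G) such that the superposition F = G ⊕_φ H is connected if and only if c(G) ≤ |V(H)|, where c(G) denotes the number of connected components of G. -/
/-!
`G ⊕_φ H` is connected exactly when every component of `G` meets `φ(V(H))`: the copy of the
connected graph `H` joins all the components it meets, while a component it misses keeps all its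
edges inside itself. The existence of such an injective `φ` is then a counting problem: pick one
vertex in each component and enlarge this set to a set of `|V(H)|` vertices.
-/

open SimpleGraph

theorem SimpleGraph.Reachable.mem_of_adj_closed {V : Type*} {G : SimpleGraph V} {s : Set V}
    (hs : ∀ ⦃u v⦄, u ∈ s → G.Adj u v → v ∈ s) {u v : V} (h : G.Reachable u v) (hu : u ∈ s) :
    v ∈ s := by
  rw [reachable_iff_reflTransGen] at h
  induction h with
  | refl => exact hu
  | tail _ hadj ih => exact hs ih hadj

theorem superpose_connected_iff {α β : Type*} (G : SimpleGraph α) {H : SimpleGraph β}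
    (hH : H.Connected) (φ : β ↪ α) :
    (superpose G H φ).Connected ↔ Function.Surjective (G.connectedComponentMk ∘ φ) := by
  constructor
  · intro hconn C
    by_contra! hC
    obtain ⟨v, rfl⟩ := C.exists_rep
    obtain ⟨b⟩ := hH.nonempty
    refine hC b ((hconn.preconnected v (φ b)).mem_of_adj_closed
      (s := {x | G.connectedComponentMk x = G.connectedComponentMk v}) ?_ rfl)
    rintro x y (hx : G.connectedComponentMk x = _) (hadj | ⟨-, x', y', -, rfl, rfl⟩)
    · exact (ConnectedComponent.sound hadj.reachable).symm.trans hx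
    · exact absurd hx (hC x')
  · intro hφ
    obtain ⟨b⟩ := hH.nonempty
    have hαne : Nonempty α := ⟨φ b⟩
    have reach_image (u : α) : ∃ b, (superpose G H φ).Reachable u (φ b) := by
      obtain ⟨b, hb⟩ := hφ (G.connectedComponentMk u)
      exact ⟨b, (ConnectedComponent.exact hb.symm).mono le_sup_left⟩
    refine ⟨fun u v => ?_⟩
    obtain ⟨bu, hu⟩ := reach_image u
    obtain ⟨bv, hv⟩ := reach_image v
    have himage : (superpose G H φ).Reachable (φ bu) (φ bv) :=
      ((hH.preconnected bu bv).map (Embedding.map φ H).toHom).mono le_sup_right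
    exact (hu.trans himage).trans hv.symm

theorem exists_embedding_surjective_comp_iff {α β γ : Type*} [Fintype α] [Fintype β] [Finite γ]
    {π : α → γ} (hπ : Function.Surjective π) (hβα : Fintype.card β ≤ Fintype.card α) :
    (∃ φ : β ↪ α, Function.Surjective (π ∘ φ)) ↔ Nat.card γ ≤ Fintype.card β := by
  classical
  have := Fintype.ofFinite γ
  constructor
  · rintro ⟨φ, hφ⟩
    simpa using Nat.card_le_card_of_surjective _ hφ
  · intro hγβ
    have hsection : (Finset.univ.image (Function.surjInv hπ)).card ≤ Fintype.card β :=
      Finset.card_image_le.trans (by simpa using hγβ)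
    obtain ⟨t, hst, ht⟩ := Finset.exists_superset_card_eq hsection hβα
    let e : β ≃ t := (Fintype.equivOfCardEq (by simp [ht])).symm
    refine ⟨e.toEmbedding.trans (Function.Embedding.subtype _), fun c => ?_⟩
    obtain ⟨b, hb⟩ := e.surjective ⟨_, hst (Finset.mem_image_of_mem _ (Finset.mem_univ c))⟩
    exact ⟨b, by simp [hb, Function.surjInv_eq hπ]⟩

/-- Let `G` and `H` be finite graphs with `|V(H)| ≤ |V(G)|` and `H` connected. Then
there is an injective `φ : V(H) ↪ V(G)` with `G ⊕_φ H` connected iff the number of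
connected components of `G` is at most `|V(H)|`. -/
theorem stmt5 {α β : Type*} [Fintype α] [Fintype β]
    (G : SimpleGraph α) (H : SimpleGraph β)
    (hcard : Fintype.card β ≤ Fintype.card α) (hH : H.Connected) :
    (∃ φ : β ↪ α, (superpose G H φ).Connected) ↔
      Nat.card G.ConnectedComponent ≤ Fintype.card β := by
  simp only [superpose_connected_iff G hH]
  exact exists_embedding_surjective_comp_iff Quot.mk_surjective hcard
end

section
/- Let G and H be finite simple graphs such that |V(H)| ≤ |V(G)|, H has no isolated vertices, and H is disconnected. Then there exists an injective map φ : V(H) → V(G) such that the superposition F = G ⊕_φ H is connected if and only if both of the following hold: (i) i(G) ≤ |V(H)| − c(H), and (ii) c(G) ≤ |V(H)| − c(H) + 1, where c denotes the number of connected components and i(G) denotes the number of isolated vertices of G. -/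
open SimpleGraph

/-!
Contract the components of `G` and of `H` to single vertices and join the component of `φ x`
to that of `x` for every vertex `x` of `H`. This bipartite graph has `c(G) + c(H)` vertices and at
most `|V(H)|` edges, and it is connected when `G ⊕_φ H` is; hence (ii). Since `c(H) ≥ 2`, (ii)
and `|V(H)| ≤ |V(G)|` already force (i): otherwise every component of `G` would be an isolated
vertex, so `c(G) = |V(G)| ≥ |V(H)|`.

Conversely, only the images of the components of `H` matter: they are disjoint blocks of the
prescribed sizes in `V(G)`, and `G ⊕_φ H` is connected as soon as `G` with a clique added on each
block is. The blocks are placed one at a time. A block of size `s` that contains representatives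
of `min s c(G)` components merges them into one, and a second vertex of one merged component
is kept out of the block, so that each component of the new graph still has a free vertex.
-/

open Finset

theorem card_add_card_le_card_add_one_of_surjective {X Y : Type*} [Finite X] {f : X → Y}
    (hf : f.Surjective) {M : Finset X} (hM : M.Nonempty) (hfM : ∀ a ∈ M, ∀ b ∈ M, f a = f b) :
    Nat.card Y + #M ≤ Nat.card X + 1 := by
  classical
  have := Fintype.ofFinite X
  obtain ⟨m, hm⟩ := hM
  have hsurj : Function.Surjective fun x : ((M.erase m)ᶜ : Finset X) => f x := by
    intro y
    obtain ⟨x, rfl⟩ := hf y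
    by_cases hx : x ∈ M.erase m
    · exact ⟨⟨m, by simp⟩, hfM m hm x (mem_of_mem_erase hx)⟩
    · exact ⟨⟨x, mem_compl.2 hx⟩, rfl⟩
  have := Nat.card_le_card_of_surjective _ hsurj
  rw [Nat.card_eq_finsetCard, card_compl, card_erase_of_mem hm,
    ← Nat.card_eq_fintype_card] at this
  have := card_pos.2 ⟨m, hm⟩
  have := card_le_univ M
  rw [← Nat.card_eq_fintype_card] at this
  omega

namespace SimpleGraph

variable {V : Type*}

theorem Reachable.lift {W : Type*} {G : SimpleGraph V} {G' : SimpleGraph W} (f : V → W)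
    (h : ∀ u v, G.Adj u v → G'.Reachable (f u) (f v)) {u v : V} (huv : G.Reachable u v) :
    G'.Reachable (f u) (f v) := by
  rw [reachable_iff_reflTransGen] at huv ⊢
  exact huv.lift' f fun a b hab => (reachable_iff_reflTransGen _ _).1 (h a b hab)

theorem Connected.of_forall_adj_reachable {G G' : SimpleGraph V} (hG : G.Connected)
    (h : ∀ u v, G.Adj u v → G'.Reachable u v) : G'.Connected :=
  (connected_iff _).2 ⟨fun u v => (hG.preconnected u v).lift id h, hG.nonempty⟩

theorem connected_of_card_connectedComponent_le_one [Finite V] [Nonempty V] {G : SimpleGraph V}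
    (h : Nat.card G.ConnectedComponent ≤ 1) : G.Connected := by
  have := Finite.card_le_one_iff_subsingleton.1 h
  exact (connected_iff _).2 ⟨fun u v => ConnectedComponent.exact (Subsingleton.elim _ _),
    inferInstance⟩

theorem IsIsolated.eq_of_reachable {G : SimpleGraph V} {u v : V} (hu : G.IsIsolated u)
    (huv : G.Reachable u v) : u = v := by
  obtain ⟨p⟩ := huv
  cases p with
  | nil => rfl
  | cons h _ => exact absurd h (hu _)

theorem card_le_card_connectedComponent_of_le_ncard_isIsolated [Finite V] {G : SimpleGraph V}
    (h : Nat.card G.ConnectedComponent ≤ {v | G.IsIsolated v}.ncard) :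
    Nat.card V ≤ Nat.card G.ConnectedComponent := by
  have hinj : Set.InjOn G.connectedComponentMk {v | G.IsIsolated v} := fun u hu _ _ huv =>
    IsIsolated.eq_of_reachable hu (ConnectedComponent.exact huv)
  have himage : G.connectedComponentMk '' {v | G.IsIsolated v} = Set.univ := by
    refine Set.eq_of_subset_of_ncard_le (Set.subset_univ _) ?_
    rwa [hinj.ncard_image, Set.ncard_univ]
  have hall : ∀ v, G.IsIsolated v := fun v => by
    obtain ⟨u, hu, huv⟩ := himage.symm ▸ Set.mem_univ (G.connectedComponentMk v)
    rwa [hu.eq_of_reachable (ConnectedComponent.exact huv)] at hu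
  exact Nat.card_le_card_of_injective _ fun u _ huv =>
    (hall u).eq_of_reachable (ConnectedComponent.exact huv)

variable {α β : Type*}

def superposeComponentGraph (G : SimpleGraph α) (H : SimpleGraph β) (φ : β ↪ α) :
    SimpleGraph (G.ConnectedComponent ⊕ H.ConnectedComponent) :=
  fromEdgeSet (Set.range fun x => s(.inl (G.connectedComponentMk (φ x)),
    .inr (H.connectedComponentMk x)))

theorem superposeComponentGraph_adj_inl_inr (G : SimpleGraph α) (H : SimpleGraph β) (φ : β ↪ α)
    (x : β) : (superposeComponentGraph G H φ).Adj (.inl (G.connectedComponentMk (φ x)))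
      (.inr (H.connectedComponentMk x)) :=
  (fromEdgeSet_adj _).2 ⟨⟨x, rfl⟩, Sum.inl_ne_inr⟩

theorem superposeComponentGraph_connected {G : SimpleGraph α} {H : SimpleGraph β} {φ : β ↪ α}
    (h : (superpose G H φ).Connected) : (superposeComponentGraph G H φ).Connected := by
  set B := superposeComponentGraph G H φ
  have hedge : ∀ u v, (superpose G H φ).Adj u v →
      B.Reachable (.inl (G.connectedComponentMk u)) (.inl (G.connectedComponentMk v)) := by
    rintro u v (huv | huv)
    · rw [ConnectedComponent.sound huv.reachable]
    · obtain ⟨x, y, hxy, rfl, rfl⟩ := (map_adj _ _ _ _).1 huv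
      have hx := superposeComponentGraph_adj_inl_inr G H φ x
      rw [ConnectedComponent.sound hxy.reachable] at hx
      exact hx.reachable.trans (superposeComponentGraph_adj_inl_inr G H φ y).reachable.symm
  obtain ⟨v₀⟩ := h.nonempty
  refine (connected_iff_exists_forall_reachable _).2 ⟨.inl (G.connectedComponentMk v₀), ?_⟩
  rintro (D | C)
  · induction D using ConnectedComponent.ind with
    | h v => exact (h.preconnected v₀ v).lift _ hedge
  · induction C using ConnectedComponent.ind with
    | h x =>
      exact ((h.preconnected v₀ (φ x)).lift _ hedge).trans
        (superposeComponentGraph_adj_inl_inr G H φ x).reachable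

theorem card_edgeSet_superposeComponentGraph_le [Finite β] (G : SimpleGraph α)
    (H : SimpleGraph β) (φ : β ↪ α) :
    Nat.card (superposeComponentGraph G H φ).edgeSet ≤ Nat.card β := by
  rw [superposeComponentGraph, edgeSet_fromEdgeSet]
  exact (Nat.card_mono (Set.finite_range _) Set.sdiff_subset).trans (Finite.card_range_le _)

theorem card_connectedComponent_add_card_connectedComponent_le [Finite α] [Finite β]
    {G : SimpleGraph α} {H : SimpleGraph β} {φ : β ↪ α} (h : (superpose G H φ).Connected) :
    Nat.card G.ConnectedComponent + Nat.card H.ConnectedComponent ≤ Nat.card β + 1 := by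
  have := (superposeComponentGraph_connected h).card_vert_le_card_edgeSet_add_one
  rw [Nat.card_sum] at this
  have := card_edgeSet_superposeComponentGraph_le G H φ
  omega

def completeOn (T : Set V) : SimpleGraph V := fromRel fun u v => u ∈ T ∧ v ∈ T

theorem completeOn_reachable {T : Set V} {u v : V} (hu : u ∈ T) (hv : v ∈ T) :
    (completeOn T).Reachable u v := by
  obtain rfl | huv := eq_or_ne u v
  · rfl
  · exact Adj.reachable ((fromRel_adj _ _ _).2 ⟨huv, .inl ⟨hu, hv⟩⟩)

theorem Connected.sup_of_sup_completeOn {G K : SimpleGraph V} {T : Set V}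
    (h : (G ⊔ completeOn T ⊔ K).Connected) (hK : ∀ u ∈ T, ∀ v ∈ T, K.Reachable u v) :
    (G ⊔ K).Connected := by
  refine h.of_forall_adj_reachable ?_
  rintro u v ((huv | huv) | huv)
  · exact huv.reachable.mono le_sup_left
  · obtain ⟨-, ⟨hu, hv⟩ | ⟨hv, hu⟩⟩ := (fromRel_adj _ _ _).1 huv <;>
      exact (hK u hu v hv).mono le_sup_right
  · exact huv.reachable.mono le_sup_right

open Classical in
theorem card_connectedComponent_add_card_image_le [Finite V] {G G' : SimpleGraph V}
    (hle : G ≤ G') {T : Finset V} (hT : T.Nonempty) (hTG' : ∀ u ∈ T, ∀ v ∈ T, G'.Reachable u v) :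
    Nat.card G'.ConnectedComponent + #(T.image G.connectedComponentMk) ≤
      Nat.card G.ConnectedComponent + 1 := by
  refine card_add_card_le_card_add_one_of_surjective (ConnectedComponent.surjective_map_ofLE hle)
    (hT.image _) ?_
  simp only [mem_image]
  rintro _ ⟨u, hu, rfl⟩ _ ⟨v, hv, rfl⟩
  exact ConnectedComponent.sound (hTG' u hu v hv)

theorem exists_subset_card_eq_card_connectedComponent_sup_completeOn_le [Finite V]
    {G : SimpleGraph V} {U : Finset V} (hU : ∀ v, ∃ u ∈ U, G.Reachable v u) (v₀ : V) {s : ℕ}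
    (hs : 0 < s) (hsU : s ≤ #U) :
    ∃ T ⊆ U, #T = s ∧ (∃ t ∈ T, G.Reachable v₀ t) ∧
      Nat.card (G ⊔ completeOn T).ConnectedComponent + min s (Nat.card G.ConnectedComponent) ≤
        Nat.card G.ConnectedComponent + 1 := by
  classical
  have := Fintype.ofFinite G.ConnectedComponent
  have hrep : ∀ D : G.ConnectedComponent, ∃ u ∈ U, G.connectedComponentMk u = D := by
    refine ConnectedComponent.ind fun v => ?_
    obtain ⟨u, hu, hvu⟩ := hU v
    exact ⟨u, hu, (ConnectedComponent.sound hvu).symm⟩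
  choose r hrU hr using hrep
  have hrinj : r.Injective := fun D D' h => by rw [← hr D, ← hr D', h]
  have : Nonempty G.ConnectedComponent := ⟨G.connectedComponentMk v₀⟩
  have : 0 < Nat.card G.ConnectedComponent := Nat.card_pos
  obtain ⟨K, hv₀K, -, hK⟩ :=
    exists_subsuperset_card_eq (subset_univ {G.connectedComponentMk v₀})
      (n := min s (Nat.card G.ConnectedComponent)) (by rw [card_singleton]; omega)
      (by simp [Nat.card_eq_fintype_card])
  -- `T` consists of representatives of the components in `K`, padded up to size `s` inside `U`
  obtain ⟨T, hKT, hTU, hT⟩ := exists_subsuperset_card_eq (image_subset_iff.2 fun D _ => hrU D)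
    (by rw [card_image_of_injective _ hrinj, hK]; exact min_le_left _ _) hsU
  have hKsub : K ⊆ T.image G.connectedComponentMk := fun D hD =>
    mem_image.2 ⟨r D, hKT (mem_image_of_mem r hD), hr D⟩
  refine ⟨T, hTU, hT, ⟨r _, hKT (mem_image_of_mem r (hv₀K (mem_singleton_self _))),
    ConnectedComponent.exact (hr _).symm⟩, ?_⟩
  have := card_connectedComponent_add_card_image_le (le_sup_left : G ≤ G ⊔ completeOn T)
    (card_pos.1 (hT ▸ hs)) fun u hu v hv => (completeOn_reachable hu hv).mono le_sup_right
  have := card_le_card hKsub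
  omega

theorem exists_forall_exists_mem_erase_reachable [Finite V] [DecidableEq V]
    {G : SimpleGraph V} {U : Finset V} (hU : ∀ v, ∃ u ∈ U, G.Reachable v u)
    (hcard : Nat.card G.ConnectedComponent < #U) :
    ∃ b ∈ U, ∀ v, ∃ u ∈ U.erase b, G.Reachable v u := by
  have := Fintype.ofFinite G.ConnectedComponent
  rw [Nat.card_eq_fintype_card, ← card_univ] at hcard
  obtain ⟨a, ha, b, hb, hab, hmk⟩ :=
    exists_ne_map_eq_of_card_lt_of_maps_to hcard fun v _ =>
      mem_coe.2 (mem_univ (G.connectedComponentMk v))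
  refine ⟨b, hb, fun v => ?_⟩
  obtain ⟨u, hu, hvu⟩ := hU v
  obtain rfl | hub := eq_or_ne u b
  · exact ⟨a, mem_erase.2 ⟨hab, ha⟩, hvu.trans (ConnectedComponent.exact hmk.symm)⟩
  · exact ⟨u, mem_erase.2 ⟨hub, hu⟩, hvu⟩

theorem exists_subset_forall_exists_mem_sdiff_reachable [Finite V] [DecidableEq V]
    {G : SimpleGraph V} {U : Finset V} (hU : ∀ v, ∃ u ∈ U, G.Reachable v u)
    (hcard : Nat.card G.ConnectedComponent < #U) {s : ℕ} (hs : 0 < s) (hsU : s < #U) :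
    ∃ T ⊆ U, #T = s ∧ (∀ v, ∃ u ∈ U \ T, (G ⊔ completeOn T).Reachable v u) ∧
      Nat.card (G ⊔ completeOn T).ConnectedComponent + min s (Nat.card G.ConnectedComponent) ≤
        Nat.card G.ConnectedComponent + 1 := by
  obtain ⟨b, hbU, hUb⟩ := exists_forall_exists_mem_erase_reachable hU hcard
  obtain ⟨T, hTU, hT, ⟨t, htT, hbt⟩, hTcard⟩ :=
    exists_subset_card_eq_card_connectedComponent_sup_completeOn_le hUb b hs
      (by rw [card_erase_of_mem hbU]; omega)
  refine ⟨T, hTU.trans (erase_subset b U), hT, fun v => ?_, hTcard⟩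
  obtain ⟨u, hu, hvu⟩ := hUb v
  by_cases huT : u ∈ T
  · -- `T` meets the component of `b`, which was kept out of `T`
    have hbT : b ∉ T := fun h => (mem_erase.1 (hTU h)).1 rfl
    refine ⟨b, mem_sdiff.2 ⟨hbU, hbT⟩, (hvu.mono le_sup_left).trans ?_⟩
    exact ((completeOn_reachable huT htT).mono le_sup_right).trans (hbt.symm.mono le_sup_left)
  · exact ⟨u, mem_sdiff.2 ⟨mem_of_mem_erase hu, huT⟩, hvu.mono le_sup_left⟩

theorem exists_pairwiseDisjoint_sup_connected [Finite V] [DecidableEq V] {κ : Type*}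
    (s : κ → ℕ) (hs : ∀ C, 0 < s C) {S : Finset κ} (hS : S.Nonempty) (G : SimpleGraph V)
    (U : Finset V) (hU : ∀ v, ∃ u ∈ U, G.Reachable v u) (hUcard : ∑ C ∈ S, s C ≤ #U)
    (hG : Nat.card G.ConnectedComponent + #S ≤ ∑ C ∈ S, s C + 1) :
    ∃ T : κ → Finset V, (∀ C ∈ S, T C ⊆ U ∧ #(T C) = s C) ∧ (S : Set κ).PairwiseDisjoint T ∧
      ∀ K : SimpleGraph V, (∀ C ∈ S, ∀ u ∈ T C, ∀ v ∈ T C, K.Reachable u v) →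
        (G ⊔ K).Connected := by
  classical
  induction hS using Finset.Nonempty.cons_induction generalizing G U with
  | singleton C =>
    rw [sum_singleton] at hUcard hG
    rw [card_singleton] at hG
    obtain ⟨u₀, -⟩ := card_pos.1 ((hs C).trans_le hUcard)
    have : Nonempty V := ⟨u₀⟩
    obtain ⟨T, hTU, hT, -, hcard⟩ :=
      exists_subset_card_eq_card_connectedComponent_sup_completeOn_le hU u₀ (hs C) hUcard
    refine ⟨fun _ => T, by simp [hTU, hT], by simp, fun K hK => ?_⟩
    have hconn : (G ⊔ completeOn T).Connected :=
      connected_of_card_connectedComponent_le_one (by omega)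
    exact (hconn.mono le_sup_left).sup_of_sup_completeOn (hK C (mem_singleton_self C))
  | cons C S hCS hS ih =>
    rw [sum_cons] at hUcard hG
    rw [card_cons] at hG
    have hSsum : #S ≤ ∑ C ∈ S, s C := by simpa using card_nsmul_le_sum S s 1 fun C _ => hs C
    have hSpos : 0 < #S := card_pos.2 hS
    obtain ⟨T₀, hT₀U, hT₀, hU', hcard⟩ :=
      exists_subset_forall_exists_mem_sdiff_reachable hU (by omega) (hs C) (by omega)
    obtain ⟨T, hTU, hdisj, hconn⟩ := ih (G ⊔ completeOn T₀) (U \ T₀) hU'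
      (by rw [card_sdiff_of_subset hT₀U]; omega) (by omega)
    have hne : ∀ D ∈ S, D ≠ C := fun D hD => ne_of_mem_of_not_mem hD hCS
    refine ⟨Function.update T C T₀, fun D hD => ?_, ?_, fun K hK => ?_⟩
    · rcases mem_cons.1 hD with rfl | hDS
      · rw [Function.update_self]
        exact ⟨hT₀U, hT₀⟩
      · rw [Function.update_of_ne (hne D hDS)]
        exact ⟨(hTU D hDS).1.trans sdiff_subset, (hTU D hDS).2⟩
    · rw [coe_cons, Set.pairwiseDisjoint_insert]
      refine ⟨fun i hi j hj hij => ?_, fun j hj hCj => ?_⟩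
      · simpa only [Function.onFun, Function.update_of_ne (hne i hi),
          Function.update_of_ne (hne j hj)] using hdisj hi hj hij
      · rw [Function.update_self, Function.update_of_ne hCj.symm]
        exact disjoint_of_subset_right (hTU j hj).1 disjoint_sdiff
    · refine (hconn K fun D hD => ?_).sup_of_sup_completeOn ?_
      · simpa only [Function.update_of_ne (hne D hD)] using hK D (mem_cons_of_mem hD)
      · simpa only [Function.update_self, mem_coe] using hK C (mem_cons_self C S)

end SimpleGraph

open SimpleGraph

theorem exists_embedding_of_card_fiber_eq {β κ V : Type*} [Fintype β] [DecidableEq κ]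
    (f : β → κ) {T : κ → Finset V} (hT : (Set.univ : Set κ).PairwiseDisjoint T)
    (hcard : ∀ C, #{x | f x = C} = #(T C)) :
    ∃ φ : β ↪ V, ∀ C, ∀ t ∈ T C, ∃ x, f x = C ∧ φ x = t := by
  have e : ∀ C, {x // f x = C} ≃ T C := fun C =>
    Fintype.equivOfCardEq (by rw [Fintype.card_subtype, Fintype.card_coe, hcard])
  let E : β ≃ Σ C, T C := (Equiv.sigmaFiberEquiv f).symm.trans (Equiv.sigmaCongrRight e)
  have hval : Function.Injective fun p : Σ C, T C => (p.2 : V) := by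
    rintro ⟨C, t, ht⟩ ⟨C', t', ht'⟩ (rfl : t = t')
    obtain rfl : C = C' := by_contra fun hCC' =>
      disjoint_left.1 (hT (Set.mem_univ C) (Set.mem_univ C') hCC') ht ht'
    rfl
  refine ⟨E.toEmbedding.trans ⟨_, hval⟩, fun C t ht => ⟨E.symm ⟨C, t, ht⟩, ?_, ?_⟩⟩
  · exact congrArg Sigma.fst (E.apply_symm_apply ⟨C, t, ht⟩)
  · simp only [Function.Embedding.trans_apply, Function.Embedding.coeFn_mk,
      Equiv.apply_symm_apply]

theorem stmt6_general {α β : Type*} [Fintype α] [Fintype β]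
    (G : SimpleGraph α) (H : SimpleGraph β)
    (hcard : Fintype.card β ≤ Fintype.card α)
    (hne : Nonempty β) (hdis : ¬ H.Connected) :
    (∃ φ : β ↪ α, (superpose G H φ).Connected) ↔
      ({v : α | ∀ w : α, ¬ G.Adj v w}.ncard + Nat.card H.ConnectedComponent ≤
          Fintype.card β ∧
        Nat.card G.ConnectedComponent + Nat.card H.ConnectedComponent ≤
          Fintype.card β + 1) := by
  classical
  simp only [← Nat.card_eq_fintype_card] at hcard ⊢
  have hH : 2 ≤ Nat.card H.ConnectedComponent := by
    by_contra! h
    exact hdis (connected_of_card_connectedComponent_le_one (by omega))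
  constructor
  · rintro ⟨φ, hφ⟩
    have hii := card_connectedComponent_add_card_connectedComponent_le hφ
    refine ⟨?_, hii⟩
    change {v | G.IsIsolated v}.ncard + _ ≤ _
    by_contra! hi
    have := card_le_card_connectedComponent_of_le_ncard_isIsolated (G := G) (by omega)
    omega
  · rintro ⟨-, hii⟩
    have hfiber : ∀ C : H.ConnectedComponent, 0 < #{x | H.connectedComponentMk x = C} :=
      ConnectedComponent.ind fun x => card_pos.2 ⟨x, by simp⟩
    have hsum : ∑ C, #{x | H.connectedComponentMk x = C} = Nat.card β := by
      simpa using (card_eq_sum_card_fiberwise (s := univ) fun x _ =>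
        mem_univ (H.connectedComponentMk x)).symm
    obtain ⟨T, hT, hdisj, hconn⟩ := exists_pairwiseDisjoint_sup_connected
      (fun C => #{x | H.connectedComponentMk x = C}) hfiber univ_nonempty G univ
      (fun v => ⟨v, mem_univ v, .rfl⟩) (by simpa [hsum] using hcard) (by simpa [hsum] using hii)
    obtain ⟨φ, hφ⟩ := exists_embedding_of_card_fiber_eq H.connectedComponentMk
      (by simpa using hdisj) fun C => (hT C (mem_univ C)).2.symm
    refine ⟨φ, hconn _ fun C _ u hu v hv => ?_⟩
    obtain ⟨x, rfl, rfl⟩ := hφ _ u hu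
    obtain ⟨y, hy, rfl⟩ := hφ _ v hv
    exact (ConnectedComponent.exact hy.symm).map (Embedding.map φ H).toHom

/-- Let `|V(H)| ≤ |V(G)|`, `H` without isolated vertices and disconnected (nonempty
and not connected). Then there is an injective `φ : V(H) ↪ V(G)` with `G ⊕_φ H`
connected iff (i) `i(G) ≤ |V(H)| - c(H)` and (ii) `c(G) ≤ |V(H)| - c(H) + 1`
(stated additively to avoid truncated subtraction). -/
theorem stmt6 {α β : Type*} [Fintype α] [Fintype β]
    (G : SimpleGraph α) (H : SimpleGraph β)
    (hcard : Fintype.card β ≤ Fintype.card α)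
    (hiso : ∀ x : β, ∃ y : β, H.Adj x y)
    (hne : Nonempty β) (hdis : ¬ H.Connected) :
    (∃ φ : β ↪ α, (superpose G H φ).Connected) ↔
      ({v : α | ∀ w : α, ¬ G.Adj v w}.ncard + Nat.card H.ConnectedComponent ≤
          Fintype.card β ∧
        Nat.card G.ConnectedComponent + Nat.card H.ConnectedComponent ≤
          Fintype.card β + 1) :=
  stmt6_general G H hcard hne hdis
end

section
/- Let G be a connected finite simple graph and let H be a finite simple graph. If there exists an injective map φ : V(H) → V(G) such that the superposition F = G ⊕_φ H is edge 2-connected, then p(G) ≤ |V(H)|, where p(G) denotes the number of pendant biconnected components of G. -/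
open SimpleGraph

/-- A graph is edge 2-connected if it is connected and has no bridge. -/
def TwoEdgeConnected {α : Type*} (G : SimpleGraph α) : Prop :=
  G.Connected ∧ ∀ e : Sym2 α, ¬ G.IsBridge e

/-- A biconnected component `C` of `G` is pendant if exactly one bridge of `G` has an
endpoint in `C`. -/
def IsPendant {α : Type*} (G : SimpleGraph α)
    (C : (bicompGraph G).ConnectedComponent) : Prop :=
  ∃! e : Sym2 α, G.IsBridge e ∧ ∃ v ∈ C.supp, v ∈ e

/-- `p(G)`: the number of pendant biconnected components of `G`. -/
noncomputable def numPendant {α : Type*} (G : SimpleGraph α) : ℕ :=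
  {C : (bicompGraph G).ConnectedComponent | IsPendant G C}.ncard

/-!
Let `C` be a pendant biconnected component of `G` with bridge `vw`, `v ∈ C`. Leaving `C` along
an edge of `G` other than `vw` would use a second bridge at `C`, so if no edge of `H` touches
`C`, every path from `v` to `w` in `G ⊕_φ H` avoiding `vw` stays in `C`. Since `v` and `w` lie
in different biconnected components, `vw` would be a bridge of `G ⊕_φ H`. Hence every pendant
component contains a vertex `φ b`, and distinct components contain distinct vertices.
-/

section

variable {α : Type*} {G K : SimpleGraph α}

lemma bicompGraph_adj {x y : α} :
    (bicompGraph G).Adj x y ↔ G.Adj x y ∧ ¬ G.IsBridge s(x, y) :=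
  deleteEdges_adj

lemma SimpleGraph.IsBridge.connectedComponentMk_bicompGraph_ne {v w : α}
    (hb : G.IsBridge s(v, w)) :
    (bicompGraph G).connectedComponentMk v ≠ (bicompGraph G).connectedComponentMk w := by
  intro hvw
  refine isBridge_iff.mp hb ((ConnectedComponent.exact hvw).mono fun x y hxy => ?_)
  obtain ⟨hG, hnb⟩ := bicompGraph_adj.mp hxy
  refine deleteEdges_adj.mpr ⟨hG, fun he => hnb ?_⟩
  rwa [Set.mem_singleton_iff.mp he]

lemma IsPendant.exists_mem_supp_mem_support_of_sup {C : (bicompGraph G).ConnectedComponent}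
    (hC : IsPendant G C) (hK : ∀ e, ¬ (G ⊔ K).IsBridge e) : ∃ v ∈ C.supp, v ∈ K.support := by
  by_contra! hCK
  obtain ⟨e, ⟨hbr, v, hvC, hve⟩, huniq⟩ := hC
  obtain ⟨w, rfl⟩ := Sym2.mem_iff_exists.mp hve
  refine hK s(v, w) (isBridge_iff.mpr fun ⟨p⟩ => ?_)
  have hwC : w ∈ C.supp := by
    by_contra hwC
    obtain ⟨d, -, hxC, hyC⟩ := p.exists_boundary_dart C.supp hvC hwC
    obtain ⟨hadj | hadj, hne⟩ := deleteEdges_adj.mp d.adj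
    · by_cases hb : G.IsBridge s(d.fst, d.snd)
      · exact hne (huniq _ ⟨hb, d.fst, hxC, Sym2.mem_mk_left _ _⟩)
      · rw [ConnectedComponent.mem_supp_iff] at hxC hyC
        exact hyC ((ConnectedComponent.connectedComponentMk_eq_of_adj
          (bicompGraph_adj.mpr ⟨hadj, hb⟩)).symm.trans hxC)
    · exact hCK _ hxC ⟨_, hadj⟩
  rw [ConnectedComponent.mem_supp_iff] at hvC hwC
  exact hbr.connectedComponentMk_bicompGraph_ne (hvC.trans hwC.symm)

end

theorem stmt9_general {α β : Type*} [Fintype β]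
    (G : SimpleGraph α) (H : SimpleGraph β)
    (h : ∃ φ : β ↪ α, TwoEdgeConnected (superpose G H φ)) :
    numPendant G ≤ Fintype.card β := by
  obtain ⟨φ, -, hF⟩ := h
  have hcover : {C | IsPendant G C} ⊆
      Set.range fun b => (bicompGraph G).connectedComponentMk (φ b) := by
    intro C hC
    obtain ⟨v, hvC, hvH⟩ := IsPendant.exists_mem_supp_mem_support_of_sup hC hF
    rw [support_map] at hvH
    obtain ⟨b, -, rfl⟩ := hvH
    exact ⟨b, hvC⟩
  calc numPendant G ≤ (Set.range fun b => (bicompGraph G).connectedComponentMk (φ b)).ncard :=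
        Set.ncard_le_ncard hcover (Set.finite_range _)
    _ ≤ (Set.univ : Set β).ncard := by
        rw [← Set.image_univ]
        exact Set.ncard_image_le Set.finite_univ
    _ = Fintype.card β := by rw [Set.ncard_univ, Nat.card_eq_fintype_card]

/-- Let `G` be connected. If there is an injective `φ : V(H) ↪ V(G)` such that
`F = G ⊕_φ H` is edge 2-connected, then `p(G) ≤ |V(H)|`. -/
theorem stmt9 {α β : Type*} [Fintype α] [Fintype β]
    (G : SimpleGraph α) (hG : G.Connected) (H : SimpleGraph β)
    (h : ∃ φ : β ↪ α, TwoEdgeConnected (superpose G H φ)) :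
    numPendant G ≤ Fintype.card β :=
  stmt9_general G H h
end

section
/- Let H be a finite simple graph and let n ≥ 1 be an integer. If H contains a matching with 5^{10n} edges, then H contains the matching graph with n edges (the disjoint union of n copies of K₂) as an induced subgraph, or H contains the complete bipartite graph K_{n,n} as a subgraph. -/
open SimpleGraph
lemma ramsey_greedy {α : Type*} [DecidableEq α] (k : ℕ) (hk : 2 ≤ k) (f : α → α → Fin k) :
    ∀ (s : ℕ) (S : Finset α), k ^ s ≤ S.card →
    ∃ g : Fin s → α, Function.Injective g ∧ (∀ i, g i ∈ S) ∧
      ∃ c : Fin s → Fin k, ∀ i j : Fin s, i < j → f (g i) (g j) = c i := by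
  intro s
  induction s with
  | zero =>
    intro S _
    exact ⟨Fin.elim0, fun i => i.elim0, fun i => i.elim0, Fin.elim0, fun i => i.elim0⟩
  | succ s ih =>
    intro S hS
    have hSne : S.Nonempty := Finset.card_pos.mp (lt_of_lt_of_le (pow_pos (by omega) _) hS)
    obtain ⟨x, hx⟩ := hSne
    have hbig : ∃ cc : Fin k, k ^ s ≤ ((S.erase x).filter (fun y => f x y = cc)).card := by
      by_contra h
      push_neg at h
      have hsum : (S.erase x).card
          = ∑ cc : Fin k, ((S.erase x).filter (fun y => f x y = cc)).card :=
        Finset.card_eq_sum_card_fiberwise (fun y _ => Finset.mem_univ _)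
      have h1 : (∑ cc : Fin k, ((S.erase x).filter (fun y => f x y = cc)).card) + k
          ≤ k * k ^ s := by
        calc (∑ cc : Fin k, ((S.erase x).filter (fun y => f x y = cc)).card) + k
            = ∑ cc : Fin k, (((S.erase x).filter (fun y => f x y = cc)).card + 1) := by
              rw [Finset.sum_add_distrib]
              simp [Finset.card_univ]
          _ ≤ ∑ _cc : Fin k, k ^ s :=
              Finset.sum_le_sum (fun cc _ => by have := h cc; omega)
          _ = k * k ^ s := by simp [Finset.sum_const, mul_comm]
      have h2 : (S.erase x).card + 1 = S.card := Finset.card_erase_add_one hx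
      have hpow : k ^ (s+1) = k * k ^ s := by ring
      omega
    obtain ⟨cc, hcc⟩ := hbig
    obtain ⟨g', hginj, hgmem, c', hc'⟩ := ih _ hcc
    have hgx : ∀ i, g' i ≠ x := by
      intro i
      have := hgmem i
      rw [Finset.mem_filter] at this
      exact Finset.ne_of_mem_erase this.1
    have hgcol : ∀ i, f x (g' i) = cc := by
      intro i
      have := hgmem i
      rw [Finset.mem_filter] at this
      exact this.2
    refine ⟨Fin.cons x g', ?_, ?_, Fin.cons cc c', ?_⟩
    · intro i j hij
      induction i using Fin.cases with
      | zero =>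
        induction j using Fin.cases with
        | zero => rfl
        | succ j =>
          simp only [Fin.cons_zero, Fin.cons_succ] at hij
          exact absurd hij.symm (hgx j)
      | succ i =>
        induction j using Fin.cases with
        | zero =>
          simp only [Fin.cons_zero, Fin.cons_succ] at hij
          exact absurd hij (hgx i)
        | succ j =>
          simp only [Fin.cons_succ] at hij
          rw [hginj hij]
    · intro i
      induction i using Fin.cases with
      | zero => simp only [Fin.cons_zero]; exact hx
      | succ i =>
        simp only [Fin.cons_succ]
        have := hgmem i
        rw [Finset.mem_filter] at this
        exact Finset.mem_of_mem_erase this.1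
    · intro i j hij
      induction i using Fin.cases with
      | zero =>
        induction j using Fin.cases with
        | zero => exact absurd hij (lt_irrefl _)
        | succ j =>
          simp only [Fin.cons_zero, Fin.cons_succ]
          exact hgcol j
      | succ i =>
        induction j using Fin.cases with
        | zero => exact absurd hij (by simp [Fin.lt_def])
        | succ j =>
          have hij' : i < j := by
            rw [Fin.lt_def] at hij ⊢
            simpa using hij
          simp only [Fin.cons_succ]
          exact hc' i j hij'

lemma ramsey_mono {α : Type*} [DecidableEq α] (k t : ℕ) (hk : 2 ≤ k)
    (f : α → α → Fin k) (S : Finset α) (h : k ^ (k * t) ≤ S.card) :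
    ∃ (g : Fin t → α) (col : Fin k), Function.Injective g ∧ (∀ i, g i ∈ S) ∧
      ∀ i j : Fin t, i < j → f (g i) (g j) = col := by
  obtain ⟨g, hinj, hmem, c, hc⟩ := ramsey_greedy k hk f (k * t) S h
  have hpig : ∃ col : Fin k, t ≤ (Finset.univ.filter (fun i => c i = col)).card := by
    by_contra h'
    push_neg at h'
    have hsum : (Finset.univ : Finset (Fin (k * t))).card
        = ∑ col : Fin k, (Finset.univ.filter (fun i => c i = col)).card :=
      Finset.card_eq_sum_card_fiberwise (fun y _ => Finset.mem_univ _)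
    rw [Finset.card_univ, Fintype.card_fin] at hsum
    have h1 : (∑ col : Fin k, (Finset.univ.filter (fun i => c i = col)).card) + k
        ≤ k * t := by
      calc (∑ col : Fin k, (Finset.univ.filter (fun i => c i = col)).card) + k
          = ∑ col : Fin k, ((Finset.univ.filter (fun i => c i = col)).card + 1) := by
            rw [Finset.sum_add_distrib]
            simp [Finset.card_univ]
        _ ≤ ∑ _col : Fin k, t := Finset.sum_le_sum (fun col _ => by have := h' col; omega)
        _ = k * t := by simp [Finset.sum_const, mul_comm]
    omega
  obtain ⟨col, hcol⟩ := hpig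
  obtain ⟨T, hTsub, hTcard⟩ := Finset.exists_subset_card_eq hcol
  let m := T.orderEmbOfFin hTcard
  refine ⟨fun i => g (m i), col, ?_, fun i => hmem _, ?_⟩
  · intro i j hij
    exact m.injective (hinj hij)
  · intro i j hij
    have hm : (m i : Fin (k * t)) < m j := m.strictMono hij
    have hmi : (m i : Fin (k * t)) ∈ T := T.orderEmbOfFin_mem hTcard i
    have := hTsub hmi
    rw [hc _ _ hm]
    exact (Finset.mem_filter.mp this).2

/-- If a finite graph `H` contains a matching with `5 ^ (10 * n)` edges (`n ≥ 1`),
then `H` contains the matching graph with `n` edges (the disjoint union of `n` copies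
of `K₂`) as an induced subgraph, or `H` contains `K_{n,n}` as a subgraph. -/
theorem stmt17 {β : Type*} [Fintype β] (H : SimpleGraph β) (n : ℕ) (hn : 1 ≤ n)
    (M : Finset (Sym2 β)) (hME : ↑M ⊆ H.edgeSet)
    (hMcard : M.card = 5 ^ (10 * n))
    (hMdisj : ∀ e ∈ M, ∀ f ∈ M, e ≠ f → ∀ v : β, ¬ (v ∈ e ∧ v ∈ f)) :
    (∃ a b : Fin n → β, Function.Injective (Sum.elim a b) ∧
        (∀ i, H.Adj (a i) (b i)) ∧
        (∀ i j, i ≠ j → ¬ H.Adj (a i) (a j)) ∧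
        (∀ i j, i ≠ j → ¬ H.Adj (b i) (b j)) ∧
        (∀ i j, i ≠ j → ¬ H.Adj (a i) (b j))) ∨
    (∃ a b : Fin n → β, Function.Injective (Sum.elim a b) ∧
        ∀ i j, H.Adj (a i) (b j)) := by
  classical
  -- endpoints of each edge
  set pa : Sym2 β → β := fun e => (Quot.out e).1 with hpa
  set pb : Sym2 β → β := fun e => (Quot.out e).2 with hpb
  have hout : ∀ e : Sym2 β, e = s(pa e, pb e) := fun e => by
    conv_lhs => rw [← Quot.out_eq e]
  have hamem : ∀ e : Sym2 β, pa e ∈ e := fun e => by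
    have := Sym2.mem_mk_left (pa e) (pb e)
    rwa [← hout e] at this
  have hbmem : ∀ e : Sym2 β, pb e ∈ e := fun e => by
    have := Sym2.mem_mk_right (pa e) (pb e)
    rwa [← hout e] at this
  have hadj : ∀ e ∈ M, H.Adj (pa e) (pb e) := by
    intro e he
    have : e ∈ H.edgeSet := hME he
    rw [hout e] at this
    exact (H.mem_edgeSet).mp this
  -- the coloring
  set F : Sym2 β → Sym2 β → Fin 5 := fun e e' =>
    if H.Adj (pa e) (pa e') then 1
    else if H.Adj (pb e) (pb e') then 2
    else if H.Adj (pa e) (pb e') then 3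
    else if H.Adj (pb e) (pa e') then 4
    else 0 with hF
  have hcard : (5 : ℕ) ^ (5 * (2 * n)) ≤ M.card := by
    rw [hMcard]
    apply Nat.pow_le_pow_right (by norm_num)
    omega
  obtain ⟨g, col, ginj, gmem, gmono⟩ := ramsey_mono 5 (2 * n) (by norm_num) F M hcard
  set A : Fin (2 * n) → β := fun i => pa (g i) with hA
  set B : Fin (2 * n) → β := fun i => pb (g i) with hB
  have hABadj : ∀ i, H.Adj (A i) (B i) := fun i => hadj _ (gmem i)
  -- all endpoints across distinct edges are distinct
  have hne : ∀ i j : Fin (2 * n), i ≠ j →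
      A i ≠ A j ∧ A i ≠ B j ∧ B i ≠ A j ∧ B i ≠ B j := by
    intro i j hij
    have hgij : g i ≠ g j := fun h => hij (ginj h)
    have hd := hMdisj (g i) (gmem i) (g j) (gmem j) hgij
    refine ⟨?_, ?_, ?_, ?_⟩
    · intro h; exact hd (A i) ⟨hamem _, h ▸ hamem _⟩
    · intro h; exact hd (A i) ⟨hamem _, h ▸ hbmem _⟩
    · intro h; exact hd (B i) ⟨hbmem _, h ▸ hamem _⟩
    · intro h; exact hd (B i) ⟨hbmem _, h ▸ hbmem _⟩
  have hABne : ∀ i, A i ≠ B i := fun i => (hABadj i).ne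
  -- index embeddings
  have hnlt : ∀ i : Fin n, (i : ℕ) < 2 * n := fun i => by omega
  have hnlt2 : ∀ i : Fin n, n + (i : ℕ) < 2 * n := fun i => by omega
  set e1 : Fin n → Fin (2 * n) := fun i => ⟨i, hnlt i⟩ with he1
  set e2 : Fin n → Fin (2 * n) := fun i => ⟨n + i, hnlt2 i⟩ with he2
  have he1inj : Function.Injective e1 := by
    intro i j h
    apply Fin.ext
    simpa [he1, Fin.ext_iff] using h
  have he2inj : Function.Injective e2 := by
    intro i j h
    apply Fin.ext
    have := congrArg Fin.val h
    simp only [he2] at this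
    omega
  have he12 : ∀ i j : Fin n, e1 i < e2 j := fun i j => by
    simp only [he1, he2, Fin.lt_def]
    omega
  have he12ne : ∀ i j : Fin n, e1 i ≠ e2 j := fun i j => Fin.ne_of_lt (he12 i j)
  -- endpoint picker
  set P : Bool → Fin (2 * n) → β := fun b i => if b then A i else B i with hP
  have hPne : ∀ (b b' : Bool) (i j : Fin (2 * n)), i ≠ j → P b i ≠ P b' j := by
    intro b b' i j hij
    have := hne i j hij
    cases b <;> cases b' <;> simp [hP] <;> tauto
  have hinjPQ : ∀ p q : Bool, Function.Injective (Sum.elim (P p ∘ e1) (P q ∘ e2)) := by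
    intro p q s t hst
    cases s with
    | inl i =>
      cases t with
      | inl j =>
        simp only [Sum.elim_inl, Function.comp_apply] at hst
        by_contra hne'
        have : i ≠ j := fun h => hne' (h ▸ rfl)
        exact hPne p p _ _ (fun h => this (he1inj h)) hst
      | inr j =>
        simp only [Sum.elim_inl, Sum.elim_inr, Function.comp_apply] at hst
        exact absurd hst (hPne p q _ _ (he12ne i j))
    | inr i =>
      cases t with
      | inl j =>
        simp only [Sum.elim_inl, Sum.elim_inr, Function.comp_apply] at hst
        exact absurd hst (hPne q p _ _ (Ne.symm (he12ne j i)))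
      | inr j =>
        simp only [Sum.elim_inr, Function.comp_apply] at hst
        by_contra hne'
        have : i ≠ j := fun h => hne' (h ▸ rfl)
        exact hPne q q _ _ (fun h => this (he2inj h)) hst
  -- case on the color
  fin_cases col
  -- color 0 : induced matching
  · have hc0 : ∀ i j : Fin (2 * n), i < j →
        ¬H.Adj (A i) (A j) ∧ ¬H.Adj (B i) (B j) ∧ ¬H.Adj (A i) (B j) ∧ ¬H.Adj (B i) (A j) := by
      intro i j hij
      have := gmono i j hij
      rw [hF] at this
      simp only at this
      split_ifs at this with h1 h2 h3 h4
      · exact absurd this (by decide)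
      · exact absurd this (by decide)
      · exact absurd this (by decide)
      · exact absurd this (by decide)
      · exact ⟨h1, h2, h3, h4⟩
    left
    refine ⟨A ∘ e1, B ∘ e1, ?_, fun i => hABadj _, ?_, ?_, ?_⟩
    · -- injectivity (needs A i ≠ B i within same edge)
      intro s t hst
      cases s with
      | inl i =>
        cases t with
        | inl j =>
          simp only [Sum.elim_inl, Function.comp_apply] at hst
          by_contra hne'
          have hij : i ≠ j := fun h => hne' (h ▸ rfl)
          exact (hne _ _ (fun h => hij (he1inj h))).1 hst
        | inr j =>
          simp only [Sum.elim_inl, Sum.elim_inr, Function.comp_apply] at hst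
          by_cases hij : i = j
          · subst hij; exact absurd hst (hABne _)
          · exact absurd hst (hne _ _ (fun h => hij (he1inj h))).2.1
      | inr i =>
        cases t with
        | inl j =>
          simp only [Sum.elim_inl, Sum.elim_inr, Function.comp_apply] at hst
          by_cases hij : i = j
          · subst hij; exact absurd hst.symm (hABne _)
          · exact absurd hst (hne _ _ (fun h => hij (he1inj h))).2.2.1
        | inr j =>
          simp only [Sum.elim_inr, Function.comp_apply] at hst
          by_contra hne'
          have hij : i ≠ j := fun h => hne' (h ▸ rfl)
          exact (hne _ _ (fun h => hij (he1inj h))).2.2.2 hst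
    · intro i j hij
      rcases lt_trichotomy (e1 i) (e1 j) with h | h | h
      · exact (hc0 _ _ h).1
      · exact absurd (he1inj h) hij
      · intro hadj'; exact (hc0 _ _ h).1 hadj'.symm
    · intro i j hij
      rcases lt_trichotomy (e1 i) (e1 j) with h | h | h
      · exact (hc0 _ _ h).2.1
      · exact absurd (he1inj h) hij
      · intro hadj'; exact (hc0 _ _ h).2.1 hadj'.symm
    · intro i j hij
      rcases lt_trichotomy (e1 i) (e1 j) with h | h | h
      · exact (hc0 _ _ h).2.2.1
      · exact absurd (he1inj h) hij
      · intro hadj'; exact (hc0 _ _ h).2.2.2 hadj'.symm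
  -- color 1 : Adj (A i) (A j)
  · have hc1 : ∀ i j : Fin (2 * n), i < j → H.Adj (A i) (A j) := by
      intro i j hij
      have := gmono i j hij
      rw [hF] at this
      simp only at this
      split_ifs at this with h1 h2 h3 h4
      · exact h1
      all_goals exact absurd this (by decide)
    right
    exact ⟨P true ∘ e1, P true ∘ e2, hinjPQ true true,
      fun i j => by simpa [hP] using hc1 _ _ (he12 i j)⟩
  -- color 2 : Adj (B i) (B j)
  · have hc2 : ∀ i j : Fin (2 * n), i < j → H.Adj (B i) (B j) := by
      intro i j hij
      have := gmono i j hij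
      rw [hF] at this
      simp only at this
      split_ifs at this with h1 h2 h3 h4
      · exact absurd this (by decide)
      · exact h2
      all_goals exact absurd this (by decide)
    right
    exact ⟨P false ∘ e1, P false ∘ e2, hinjPQ false false,
      fun i j => by simpa [hP] using hc2 _ _ (he12 i j)⟩
  -- color 3 : Adj (A i) (B j)
  · have hc3 : ∀ i j : Fin (2 * n), i < j → H.Adj (A i) (B j) := by
      intro i j hij
      have := gmono i j hij
      rw [hF] at this
      simp only at this
      split_ifs at this with h1 h2 h3 h4
      · exact absurd this (by decide)
      · exact absurd this (by decide)
      · exact h3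
      all_goals exact absurd this (by decide)
    right
    exact ⟨P true ∘ e1, P false ∘ e2, hinjPQ true false,
      fun i j => by simpa [hP] using hc3 _ _ (he12 i j)⟩
  -- color 4 : Adj (B i) (A j)
  · have hc4 : ∀ i j : Fin (2 * n), i < j → H.Adj (B i) (A j) := by
      intro i j hij
      have := gmono i j hij
      rw [hF] at this
      simp only at this
      split_ifs at this with h1 h2 h3 h4
      · exact absurd this (by decide)
      · exact absurd this (by decide)
      · exact absurd this (by decide)
      · exact h4
      · exact absurd this (by decide)
    right
    exact ⟨P false ∘ e1, P true ∘ e2, hinjPQ false true,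
      fun i j => by simpa [hP] using hc4 _ _ (he12 i j)⟩
end

section
/- Let 𝒞 be a hereditary class of finite simple graphs (closed under induced subgraphs and under isomorphism) whose vertex-cover number is unbounded, i.e., for every integer t there is a graph in 𝒞 with vertex-cover number greater than t. Then at least one of the following holds: (1) for every positive integer n, the matching graph with n edges belongs to 𝒞; (2) for every positive integer n, the complete graph K_n belongs to 𝒞; (3) for every positive integer n, the complete bipartite graph K_{n,n} belongs to 𝒞. -/
/-!
If every vertex cover has more than `2k` vertices, greedily adding disjoint edges never gets
stuck before `k` edges, since otherwise their endpoints would cover the graph. Color a pair of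
these edges `i < j` by which ends of edge `i` are adjacent to which ends of edge `j`: with
sixteen colors, Ramsey's theorem gives arbitrarily long sequences of edges all of whose pairs
share one adjacency pattern, and by pigeonhole one pattern occurs at every length. If the
pattern joins some end to the same end of later edges, those ends form a clique; otherwise, if it
joins one end to the opposite end of later edges, that end of the first `n` edges and the
opposite end of the next `n` form a `K_{n,n}`; otherwise the edges form an induced matching.
-/

open SimpleGraph

/-- The matching graph with `n` edges: the disjoint union of `n` copies of `K₂`. -/
def matchingGraph (n : ℕ) : SimpleGraph (Fin n × Fin 2) where
  Adj x y := x.1 = y.1 ∧ x.2 ≠ y.2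
  symm := ⟨fun x y h => ⟨h.1.symm, h.2.symm⟩⟩
  loopless := ⟨fun x h => h.2 rfl⟩

open Finset

section Ramsey

variable {α β : Type*} [Fintype α] [Nonempty α] [LinearOrder β]

theorem exists_subset_card_eq_color_eq_of_lt (f : β → β → α) :
    ∀ (m : ℕ) (S : Finset β), (Fintype.card α + 1) ^ m ≤ #S →
      ∃ T ⊆ S, #T = m ∧ ∃ cl : β → α, ∀ x ∈ T, ∀ y ∈ T, x < y → f x y = cl x
  | 0, _, _ => ⟨∅, empty_subset _, rfl, fun _ => Classical.arbitrary α, by simp⟩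
  | m + 1, S, hS => by
    classical
    have hS₀ : S.Nonempty := card_pos.mp (lt_of_lt_of_le (by positivity) hS)
    obtain ⟨x₀, hx₀, hmin⟩ := S.exists_min_image id hS₀
    obtain ⟨a, -, ha⟩ := exists_le_card_fiber_of_mul_le_card_of_maps_to (f := f x₀)
      (s := S.erase x₀) (t := univ) (n := (Fintype.card α + 1) ^ m)
      (fun _ _ => mem_univ _) univ_nonempty (by
        have : 1 ≤ (Fintype.card α + 1) ^ m := Nat.one_le_pow _ _ (by omega)
        rw [card_erase_of_mem hx₀, card_univ]
        rw [pow_succ, mul_add_one, mul_comm] at hS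
        omega)
    obtain ⟨T, hTS, hT, cl, hcl⟩ := exists_subset_card_eq_color_eq_of_lt f m _ ha
    have hT_erase : T ⊆ S.erase x₀ := hTS.trans (filter_subset _ _)
    have hx₀T : x₀ ∉ T := fun h => by simpa using hT_erase h
    refine ⟨insert x₀ T, insert_subset hx₀ (hT_erase.trans (erase_subset _ _)),
      by rw [card_insert_of_notMem hx₀T, hT], Function.update cl x₀ a, ?_⟩
    intro x hx y hy hxy
    rcases mem_insert.mp hx with rfl | hxT
    · rcases mem_insert.mp hy with rfl | hyT
      · exact absurd hxy (lt_irrefl _)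
      · simpa using (mem_filter.mp (hTS hyT)).2
    · have hx₀x : x₀ < x := (hmin x (mem_of_mem_erase (hT_erase hxT))).lt_of_ne
        (fun h : x₀ = x => hx₀T (h ▸ hxT))
      rcases mem_insert.mp hy with rfl | hyT
      · exact absurd (hxy.trans hx₀x) (lt_irrefl _)
      · rw [Function.update_of_ne hx₀x.ne', hcl x hxT y hyT hxy]

theorem exists_orderEmbedding_color_eq [Fintype β] (f : β → β → α) (s : ℕ)
    (h : (Fintype.card α + 1) ^ (Fintype.card α * s) ≤ Fintype.card β) :
    ∃ (g : Fin s ↪o β) (d : α), ∀ i j, i < j → f (g i) (g j) = d := by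
  classical
  obtain ⟨T, -, hT, cl, hcl⟩ := exists_subset_card_eq_color_eq_of_lt f _ univ (by simpa using h)
  obtain ⟨d, -, hd⟩ := exists_le_card_fiber_of_mul_le_card_of_maps_to (f := cl) (s := T)
    (t := univ) (n := s) (fun _ _ => mem_univ _) univ_nonempty (by simp [hT])
  obtain ⟨U, hUT, hU⟩ := exists_subset_card_eq hd
  have hmem (i : Fin s) := mem_filter.mp (hUT (U.orderEmbOfFin_mem hU i))
  refine ⟨U.orderEmbOfFin hU, d, fun i j hij => ?_⟩
  rw [hcl _ (hmem i).1 _ (hmem j).1 ((U.orderEmbOfFin hU).strictMono hij), (hmem i).2]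

end Ramsey

theorem exists_matching_of_le_card_isVertexCover {V : Type*} {G : SimpleGraph V} :
    ∀ k : ℕ, (∀ X : Finset V, G.IsVertexCover X → 2 * k ≤ #X) →
      ∃ v : Fin k × Fin 2 ↪ V, ∀ i, G.Adj (v (i, 0)) (v (i, 1))
  | 0, _ => ⟨⟨fun x => x.1.elim0, fun x => x.1.elim0⟩, fun i => i.elim0⟩
  | k + 1, h => by
    obtain ⟨v, hv⟩ := exists_matching_of_le_card_isVertexCover k
      fun X hX => (h X hX).trans' (by omega)
    have hcover : ¬ G.IsVertexCover (univ.map v : Finset V) := fun hX => by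
      have := h _ hX
      simp only [card_map, card_univ, Fintype.card_prod, Fintype.card_fin] at this
      omega
    obtain ⟨x, y, hxy, hx, hy⟩ : ∃ x y, G.Adj x y ∧ x ∉ Set.range v ∧ y ∉ Set.range v := by
      simpa [IsVertexCover] using hcover
    have hnew : ∀ p, ![x, y] p ∉ Set.range v := by
      intro p; fin_cases p; exacts [hx, hy]
    let w (ip : Fin (k + 1) × Fin 2) : V :=
      Fin.lastCases (![x, y] ip.2) (fun i => v (i, ip.2)) ip.1
    have hw_last (p) : w (Fin.last k, p) = ![x, y] p := Fin.lastCases_last ..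
    have hw_cast (i p) : w (Fin.castSucc i, p) = v (i, p) := Fin.lastCases_castSucc ..
    refine ⟨⟨w, ?_⟩, fun i => ?_⟩
    · rintro ⟨i, p⟩ ⟨j, q⟩ h
      induction i using Fin.lastCases <;> induction j using Fin.lastCases <;>
        simp only [hw_last, hw_cast] at h
      · fin_cases p <;> fin_cases q <;> simp_all [hxy.ne]
      · exact (hnew p ⟨_, h.symm⟩).elim
      · exact (hnew q ⟨_, h⟩).elim
      · simpa using v.injective h
    · change G.Adj (w (i, 0)) (w (i, 1))
      induction i using Fin.lastCases
      · simpa [hw_last] using hxy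
      · simpa [hw_cast] using hv _

/-- The edges `v (i, 0) v (i, 1)` are pairwise disjoint, and whether the `p`-end of an edge is
adjacent to the `q`-end of a later one is `c p q`, independently of the two edges. -/
structure IsHomogeneousMatching {V ι : Type*} [LinearOrder ι] (G : SimpleGraph V)
    (v : ι × Fin 2 → V) (c : Fin 2 → Fin 2 → Bool) : Prop where
  injective : Function.Injective v
  adj : ∀ i, G.Adj (v (i, 0)) (v (i, 1))
  adj_iff_of_lt : ∀ ⦃i j⦄, i < j → ∀ p q, G.Adj (v (i, p)) (v (j, q)) ↔ c p q

namespace IsHomogeneousMatching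

variable {V ι κ : Type*} [LinearOrder ι] [LinearOrder κ] {G : SimpleGraph V}
  {v : ι × Fin 2 → V} {c : Fin 2 → Fin 2 → Bool}

theorem comp (hv : IsHomogeneousMatching G v c) (g : κ ↪o ι) :
    IsHomogeneousMatching G (v ∘ Prod.map g id) c :=
  ⟨hv.injective.comp (g.injective.prodMap Function.injective_id), fun i => hv.adj (g i),
    fun _ _ h => hv.adj_iff_of_lt (g.lt_iff_lt.mpr h)⟩

theorem reverse (hv : IsHomogeneousMatching G v c) :
    IsHomogeneousMatching G (v ∘ Prod.map id Fin.rev) (fun p q => c p.rev q.rev) :=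
  ⟨hv.injective.comp (Function.injective_id.prodMap Fin.rev_injective),
    fun i => (hv.adj i).symm, fun _ _ h _ _ => hv.adj_iff_of_lt h _ _⟩

theorem adj_iff_of_ne (hv : IsHomogeneousMatching G v c) {i j : ι} (h : i ≠ j) (p : Fin 2) :
    G.Adj (v (i, p)) (v (j, p)) ↔ c p p := by
  rcases h.lt_or_gt with h | h
  · exact hv.adj_iff_of_lt h p p
  · exact G.adj_comm _ _ |>.trans (hv.adj_iff_of_lt h p p)

theorem not_adj_of_not_diag (hv : IsHomogeneousMatching G v c) {p : Fin 2} (h : ¬ c p p)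
    (i j : ι) : ¬ G.Adj (v (i, p)) (v (j, p)) := fun hadj =>
  h ((hv.adj_iff_of_ne (by rintro rfl; exact hadj.ne rfl) p).mp hadj)

theorem adj_iff_ne (hv : IsHomogeneousMatching G v c) (i : ι) (p q : Fin 2) :
    G.Adj (v (i, p)) (v (i, q)) ↔ p ≠ q := by
  fin_cases p <;> fin_cases q <;> simp [hv.adj i, (hv.adj i).symm]

def topEmbedding (hv : IsHomogeneousMatching G v c) (h : c 0 0) :
    (⊤ : SimpleGraph ι) ↪g G where
  toFun i := v (i, 0)
  inj' := hv.injective.comp (Prod.mk_left_injective 0)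
  map_rel_iff' {i j} := by
    rw [top_adj]
    exact ⟨fun hij hij' => G.loopless.irrefl _ (hij' ▸ hij),
      fun hij => (hv.adj_iff_of_ne hij 0).mpr h⟩

def completeBipartiteEmbedding {α β : Type*} (hv : IsHomogeneousMatching G v c)
    (l : α ↪ ι) (r : β ↪ ι) (hlr : ∀ a b, l a < r b) (h₀₀ : ¬ c 0 0) (h₀₁ : c 0 1)
    (h₁₁ : ¬ c 1 1) : completeBipartiteGraph α β ↪g G where
  toFun := Sum.elim (fun a => v (l a, 0)) (fun b => v (r b, 1))
  inj' := by
    refine Function.Injective.sumElim ?_ ?_ fun a b h => ?_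
    · exact hv.injective.comp ((Prod.mk_left_injective 0).comp l.injective)
    · exact hv.injective.comp ((Prod.mk_left_injective 1).comp r.injective)
    · simpa using hv.injective h
  map_rel_iff' {x y} := by
    rcases x with a | b <;> rcases y with a' | b'
    · simpa using hv.not_adj_of_not_diag h₀₀ (l a) (l a')
    · simpa using (hv.adj_iff_of_lt (hlr a b') 0 1).mpr h₀₁
    · simpa using ((hv.adj_iff_of_lt (hlr a' b) 0 1).mpr h₀₁).symm
    · simpa using hv.not_adj_of_not_diag h₁₁ (r b) (r b')

def matchingEmbedding {n : ℕ} {v : Fin n × Fin 2 → V} (hv : IsHomogeneousMatching G v c)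
    (hc : ∀ p q, ¬ c p q) : matchingGraph n ↪g G where
  toFun := v
  inj' := hv.injective
  map_rel_iff' {x y} := by
    obtain ⟨i, p⟩ := x
    obtain ⟨j, q⟩ := y
    change _ ↔ i = j ∧ p ≠ q
    rcases lt_trichotomy i j with h | rfl | h
    · simpa [h.ne, hv.adj_iff_of_lt h] using hc p q
    · simpa using hv.adj_iff_ne i p q
    · rw [G.adj_comm]
      simpa [h.ne', hv.adj_iff_of_lt h] using hc q p

end IsHomogeneousMatching

theorem exists_isHomogeneousMatching {V : Type*} {G : SimpleGraph V} (s : ℕ)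
    (h : ∀ X : Finset V, G.IsVertexCover X → 2 * 17 ^ (16 * s) ≤ #X) :
    ∃ (v : Fin s × Fin 2 → V) (c : Fin 2 → Fin 2 → Bool), IsHomogeneousMatching G v c := by
  classical
  obtain ⟨w, hw⟩ := exists_matching_of_le_card_isVertexCover _ h
  -- `16 = Fintype.card (Fin 2 → Fin 2 → Bool)`, the number of adjacency patterns
  obtain ⟨g, c, hc⟩ := exists_orderEmbedding_color_eq
    (fun i j (p q : Fin 2) => decide (G.Adj (w (i, p)) (w (j, q)))) s (by simp)
  refine ⟨w ∘ Prod.map g id, c, w.injective.comp (g.injective.prodMap Function.injective_id),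
    fun i => hw (g i), fun i j hij p q => ?_⟩
  rw [← congrFun (congrFun (hc i j hij) p) q, decide_eq_true_iff]
  rfl

theorem exists_forall_of_antitone {ι : Type*} [Finite ι] {P : ι → ℕ → Prop}
    (hP : ∀ i, Antitone (P i)) (h : ∀ n, ∃ i, P i n) : ∃ i, ∀ n, P i n := by
  by_contra! hne
  choose f hf using hne
  cases nonempty_fintype ι
  obtain ⟨i, hi⟩ := h (univ.sup f)
  exact hf i (hP i (le_sup (mem_univ i)) hi)

section GraphClass

variable {C : ∀ n : ℕ, SimpleGraph (Fin n) → Prop} {c : Fin 2 → Fin 2 → Bool}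

def HasHomogeneousMatchings (C : ∀ n : ℕ, SimpleGraph (Fin n) → Prop)
    (c : Fin 2 → Fin 2 → Bool) : Prop :=
  ∀ s, ∃ (N : ℕ) (G : SimpleGraph (Fin N)) (v : Fin s × Fin 2 → Fin N),
    C N G ∧ IsHomogeneousMatching G v c

theorem exists_hasHomogeneousMatchings
    (h : ∀ t, ∃ (N : ℕ) (G : SimpleGraph (Fin N)), C N G ∧
      ∀ X : Finset (Fin N), G.IsVertexCover X → t < #X) :
    ∃ c, HasHomogeneousMatchings C c := by
  refine exists_forall_of_antitone (fun c s t hst ⟨N, G, v, hG, hv⟩ =>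
    ⟨N, G, _, hG, hv.comp (Fin.castLEOrderEmb hst)⟩) fun s => ?_
  obtain ⟨N, G, hG, hcover⟩ := h (2 * 17 ^ (16 * s))
  obtain ⟨v, c, hv⟩ := exists_isHomogeneousMatching s fun X hX => (hcover X hX).le
  exact ⟨c, N, G, v, hG, hv⟩

theorem HasHomogeneousMatchings.reverse (hc : HasHomogeneousMatchings C c) :
    HasHomogeneousMatchings C fun p q => c p.rev q.rev := fun s =>
  let ⟨N, G, _, hG, hv⟩ := hc s
  ⟨N, G, _, hG, hv.reverse⟩

def IsHereditary (C : ∀ n : ℕ, SimpleGraph (Fin n) → Prop) : Prop :=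
  ∀ {n m : ℕ} (G : SimpleGraph (Fin n)) (G' : SimpleGraph (Fin m)),
    C n G → (∃ f : Fin m ↪ Fin n, ∀ x y : Fin m, G'.Adj x y ↔ G.Adj (f x) (f y)) → C m G'

namespace IsHereditary

theorem of_embedding (hC : IsHereditary C) {n m : ℕ} {G : SimpleGraph (Fin n)} (hG : C n G)
    {H : SimpleGraph (Fin m)} (f : H ↪g G) : C m H :=
  hC G H hG ⟨f.toEmbedding, fun _ _ => f.map_adj_iff.symm⟩

theorem exists_iso_of_embedding (hC : IsHereditary C) {n m : ℕ} {G : SimpleGraph (Fin n)}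
    (hG : C n G) {W : Type*} {H : SimpleGraph W} (f : H ↪g G) (e : Fin m ≃ W) :
    ∃ G' : SimpleGraph (Fin m), C m G' ∧ Nonempty (G' ≃g H) :=
  ⟨H.comap e, hC.of_embedding hG ((Iso.comap e H).toEmbedding.trans f), ⟨Iso.comap e H⟩⟩

theorem top_mem (hC : IsHereditary C) (hc : HasHomogeneousMatchings C c) (h₀₀ : c 0 0)
    (n : ℕ) : C n ⊤ :=
  let ⟨_, _, _, hG, hv⟩ := hc n
  hC.of_embedding hG (hv.topEmbedding h₀₀)

theorem exists_iso_completeBipartiteGraph (hC : IsHereditary C)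
    (hc : HasHomogeneousMatchings C c) (h₀₀ : ¬ c 0 0) (h₀₁ : c 0 1) (h₁₁ : ¬ c 1 1) (n : ℕ) :
    ∃ G : SimpleGraph (Fin (2 * n)), C (2 * n) G ∧
      Nonempty (G ≃g completeBipartiteGraph (Fin n) (Fin n)) := by
  obtain ⟨_, _, _, hG, hv⟩ := hc (n + n)
  have hlr (a b : Fin n) : Fin.castAddEmb n a < Fin.natAddEmb n b := by
    simp [Fin.lt_def]; omega
  exact hC.exists_iso_of_embedding hG (hv.completeBipartiteEmbedding _ _ hlr h₀₀ h₀₁ h₁₁)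
    ((finCongr (two_mul n)).trans finSumFinEquiv.symm)

theorem exists_iso_matchingGraph (hC : IsHereditary C) (hc : HasHomogeneousMatchings C c)
    (h : ∀ p q, ¬ c p q) (n : ℕ) :
    ∃ G : SimpleGraph (Fin (2 * n)), C (2 * n) G ∧ Nonempty (G ≃g matchingGraph n) :=
  let ⟨_, _, _, hG, hv⟩ := hc n
  hC.exists_iso_of_embedding hG (hv.matchingEmbedding h)
    ((finCongr (mul_comm 2 n)).trans finProdFinEquiv.symm)

end IsHereditary

end GraphClass

/-- Let `C` be a hereditary class of finite simple graphs (encoded as a predicate on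
graphs on `Fin n`, closed under isomorphic copies of induced subgraphs) whose
vertex-cover number is unbounded. Then `C` contains all matching graphs, or all
complete graphs, or all complete balanced bipartite graphs. -/
theorem stmt18 (C : ∀ n : ℕ, SimpleGraph (Fin n) → Prop)
    (hher : ∀ {n m : ℕ} (G : SimpleGraph (Fin n)) (G' : SimpleGraph (Fin m)),
      C n G → (∃ f : Fin m ↪ Fin n, ∀ x y : Fin m, G'.Adj x y ↔ G.Adj (f x) (f y)) →
      C m G')
    (hunb : ∀ t : ℕ, ∃ (n : ℕ) (G : SimpleGraph (Fin n)), C n G ∧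
      ∀ X : Finset (Fin n), (∀ x y : Fin n, G.Adj x y → x ∈ X ∨ y ∈ X) → t < X.card) :
    (∀ n : ℕ, 0 < n → ∃ G : SimpleGraph (Fin (2 * n)), C (2 * n) G ∧
        Nonempty (G ≃g matchingGraph n)) ∨
    (∀ n : ℕ, 0 < n → C n ⊤) ∨
    (∀ n : ℕ, 0 < n → ∃ G : SimpleGraph (Fin (2 * n)), C (2 * n) G ∧
        Nonempty (G ≃g completeBipartiteGraph (Fin n) (Fin n))) := by
  obtain ⟨c, hc⟩ := exists_hasHomogeneousMatchings fun t =>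
    let ⟨N, G, hG, hcover⟩ := hunb t
    ⟨N, G, hG, fun X hX => hcover X fun _ _ h => hX h⟩
  have hC : IsHereditary C := hher
  by_cases h₀₀ : c 0 0
  · exact Or.inr (Or.inl fun n _ => hC.top_mem hc h₀₀ n)
  by_cases h₁₁ : c 1 1
  · exact Or.inr (Or.inl fun n _ => hC.top_mem hc.reverse h₁₁ n)
  by_cases h₀₁ : c 0 1
  · exact Or.inr (Or.inr fun n _ => hC.exists_iso_completeBipartiteGraph hc h₀₀ h₀₁ h₁₁ n)
  by_cases h₁₀ : c 1 0
  · exact Or.inr (Or.inr fun n _ =>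
      hC.exists_iso_completeBipartiteGraph hc.reverse h₁₁ h₁₀ h₀₀ n)
  refine Or.inl fun n _ => hC.exists_iso_matchingGraph hc (fun p q => ?_) n
  fin_cases p <;> fin_cases q <;> assumption
end
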